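/- Let π : [0,1] → ℝ be nondecreasing, μ a Borel probability measure on [0,1], and k ∈ (0,1). Suppose α ∈ [0,1] satisfies μ([α,1]) = k (i.e. the threshold exactly exhausts the budget). Then for every nondecreasing f : [0,1] → [0,1] with ∫ f dμ = k, we have ∫_{[α,1]} π dμ ≥ ∫ π·f dμ. In other words, the indicator of the upper set [α,1] maximizes ∫ π·f dμ among all feasible monotone allocation rules. -/

import Mathlib

open MeasureTheory Set

/-!
Since `π` is monotone, `(π x - π α) * (𝟙_{[α,1]} x - f x) ≥ 0` pointwise: both factors are
nonnegative to the right of `α` and nonpositive to its left. Integrating, the budget condition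
`∫ f = μ [α,1]` kills the `π α` term, leaving `∫_{[α,1]} π - ∫ π f ≥ 0`.
-/

theorem Monotone.sub_mul_indicator_one_sub_nonneg {X : Type*} [LinearOrder X] {π : X → ℝ}
    (hπ : Monotone π) {y : ℝ} (hy : y ∈ Icc 0 1) (α x : X) :
    0 ≤ (π x - π α) * ((Ici α).indicator (1 : X → ℝ) x - y) := by
  by_cases hx : α ≤ x
  · rw [indicator_of_mem (mem_Ici.2 hx), Pi.one_apply]
    exact mul_nonneg (sub_nonneg.2 (hπ hx)) (sub_nonneg.2 hy.2)
  · rw [indicator_of_notMem (notMem_Ici.2 (not_le.1 hx)), zero_sub]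
    exact mul_nonneg_of_nonpos_of_nonpos (sub_nonpos.2 (hπ (not_le.1 hx).le)) (neg_nonpos.2 hy.1)

theorem integral_mul_le_setIntegral_Ici {X : Type*} [LinearOrder X] [TopologicalSpace X]
    [OrderClosedTopology X] [MeasurableSpace X] [OpensMeasurableSpace X]
    {μ : Measure X} [IsFiniteMeasure μ] {π f : X → ℝ} (hπ : Monotone π)
    (hπi : Integrable π μ) (hfm : AEStronglyMeasurable f μ) (hf : ∀ x, f x ∈ Icc 0 1)
    {α : X} (hbudget : ∫ x, f x ∂μ = μ.real (Ici α)) :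
    ∫ x, π x * f x ∂μ ≤ ∫ x in Ici α, π x ∂μ := by
  have hA : MeasurableSet (Ici α) := measurableSet_Ici
  have hf_norm : ∀ᵐ x ∂μ, ‖f x‖ ≤ 1 := ae_of_all _ fun x => by
    rw [Real.norm_eq_abs, abs_le]; exact ⟨by linarith [(hf x).1], (hf x).2⟩
  have hfi : Integrable f μ := (integrable_const 1).mono' hfm hf_norm
  have hπfi : Integrable (fun x => π x * f x) μ := hπi.mul_bdd hfm hf_norm
  have hπAi : Integrable (fun x => (Ici α).indicator π x) μ := hπi.indicator hA
  have h1Ai : Integrable (fun x => (Ici α).indicator (1 : X → ℝ) x) μ :=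
    (integrable_const 1).indicator hA
  have hpt : ∀ x, (π x - π α) * ((Ici α).indicator (1 : X → ℝ) x - f x)
      = ((Ici α).indicator π x - π x * f x) - π α * ((Ici α).indicator 1 x - f x) := by
    intro x
    by_cases hx : α ≤ x
    · simp only [indicator_of_mem (mem_Ici.2 hx), Pi.one_apply]; ring
    · simp only [indicator_of_notMem (notMem_Ici.2 (not_le.1 hx))]; ring
  have hexpand : ∫ x, (π x - π α) * ((Ici α).indicator (1 : X → ℝ) x - f x) ∂μ
      = (∫ x in Ici α, π x ∂μ) - ∫ x, π x * f x ∂μ := by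
    simp_rw [hpt]
    rw [integral_sub (hπAi.sub' hπfi) ((h1Ai.sub' hfi).const_mul _), integral_const_mul,
      integral_sub h1Ai hfi, integral_sub hπAi hπfi, integral_indicator hA,
      integral_indicator_one hA, hbudget, sub_self, mul_zero, sub_zero]
  rw [← sub_nonneg, ← hexpand]
  exact integral_nonneg fun x => hπ.sub_mul_indicator_one_sub_nonneg (hf x) α x

theorem stmt_7_general (μ : Measure unitInterval) [IsProbabilityMeasure μ]
    (π : unitInterval → ℝ) (hπ : Monotone π)
    (k : ℝ)
    (α : unitInterval) (hα : (μ (Set.Ici α)).toReal = k)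
    (f : unitInterval → ℝ) (hfm : Monotone f)
    (hfv : ∀ x, f x ∈ Set.Icc (0:ℝ) 1) (hfb : ∫ x, f x ∂μ = k) :
    (∫ x in Set.Ici α, π x ∂μ) ≥ ∫ x, π x * f x ∂μ :=
  integral_mul_le_setIntegral_Ici hπ
    (integrableOn_univ.1 (hπ.monotoneOn univ |>.integrableOn_isCompact isCompact_univ))
    hfm.measurable.aestronglyMeasurable hfv (by rw [hfb, ← hα, measureReal_def])

/-- If `π` is nondecreasing and the threshold `α` exactly exhausts the budget,
`μ([α,1]) = k`, then the indicator of `[α,1]` maximizes `∫ π f dμ` among all monotone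
`[0,1]`-valued `f` with `∫ f dμ = k`. -/
theorem stmt_7 (μ : Measure unitInterval) [IsProbabilityMeasure μ]
    (π : unitInterval → ℝ) (hπ : Monotone π)
    (k : ℝ) (hk : k ∈ Set.Ioo (0:ℝ) 1)
    (α : unitInterval) (hα : (μ (Set.Ici α)).toReal = k)
    (f : unitInterval → ℝ) (hfm : Monotone f)
    (hfv : ∀ x, f x ∈ Set.Icc (0:ℝ) 1) (hfb : ∫ x, f x ∂μ = k) :
    (∫ x in Set.Ici α, π x ∂μ) ≥ ∫ x, π x * f x ∂μ :=
  stmt_7_general μ π hπ k α hα f hfm hfv hfb
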